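/- Let η > 0, c ≥ 0 and a_{ij} ≥ 0 with a_{ij} ≤ e^{-|i-j|} and row/column sums bounded by η. Suppose u : ℤ^d → [0,∞) satisfies, for some nonnegative data b_i, the iterated bound u_i ≤ ∑_{n=0}^∞ c^{-n} ∑_{j∈ℤ^d} (a^n)_{ji} b_j with c > η and b_j ≤ R(|j|^ρ + 1). Then u_i ≤ C(R,ρ,d,η,c) (1 + |i|^ρ) for all i. -/

import Mathlib

/-!
For `B` large, the weight `w j = |j| ^ ρ + B` is a sub-eigenvector of the transposed kernel:
`∑ k, a k i * w k ≤ η' * w i` for a fixed `η' ∈ (η, c)`. Indeed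
`|k| ^ ρ ≤ (η' / η) |i| ^ ρ + K |k - i| ^ ρ`, the column sums of `a` are at most `η`, and the
exponential decay of `a k i` in `|k - i|` bounds `∑ k, a k i * |k - i| ^ ρ` by a constant `M`,
which is absorbed once `(η' - η) B ≥ K M`. Iterating gives `∑ j, (a ^ n) j i * w j ≤ η' ^ n * w i`;
since `b ≤ R w`, the series bounding `u i` is then dominated by a geometric series of ratio
`η' / c < 1`.
-/

open scoped BigOperators

/-- ℓ¹ distance on ℤ^d. -/
def l1dist {d : ℕ} (i j : Fin d → ℤ) : ℕ := ∑ k, (i k - j k).natAbs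

/-- ℓ¹ norm on ℤ^d. -/
def l1norm {d : ℕ} (j : Fin d → ℤ) : ℕ := ∑ k, (j k).natAbs

/-- n-fold matrix power of a kernel on ℤ^d. -/
noncomputable def matpow {ι : Type*} [DecidableEq ι] (M : ι → ι → ℝ) : ℕ → ι → ι → ℝ
  | 0 => fun i j => if i = j then 1 else 0
  | n + 1 => fun i j => ∑' k, matpow M n i k * M k j

open scoped ENNReal
open Real

theorem exists_rpow_add_le {ρ q : ℝ} (hρ : 0 < ρ) (hq : 1 < q) :
    ∃ K, 0 ≤ K ∧ ∀ x y : ℝ, 0 ≤ x → 0 ≤ y → (x + y) ^ ρ ≤ q * x ^ ρ + K * y ^ ρ := by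
  set T := q ^ ρ⁻¹
  have hT : 1 < T := one_lt_rpow hq (inv_pos.2 hρ)
  have hT1 : 0 < T - 1 := sub_pos.2 hT
  have hTρ : T ^ ρ = q := by
    rw [← rpow_mul (by linarith), inv_mul_cancel₀ hρ.ne', rpow_one]
  have hK : 0 ≤ T / (T - 1) := div_nonneg (by linarith) hT1.le
  refine ⟨(T / (T - 1)) ^ ρ, rpow_nonneg hK ρ, fun x y hx hy => ?_⟩
  rcases le_total y ((T - 1) * x) with h | h
  · calc (x + y) ^ ρ ≤ (T * x) ^ ρ := rpow_le_rpow (by positivity) (by linarith) hρ.le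
      _ = q * x ^ ρ := by rw [mul_rpow (by linarith) hx, hTρ]
      _ ≤ _ := le_add_of_nonneg_right (mul_nonneg (rpow_nonneg hK ρ) (rpow_nonneg hy ρ))
  · have hxy : x + y ≤ T / (T - 1) * y := by
      rw [div_mul_eq_mul_div, le_div_iff₀ hT1]; nlinarith
    calc (x + y) ^ ρ ≤ (T / (T - 1) * y) ^ ρ := rpow_le_rpow (by positivity) hxy hρ.le
      _ = (T / (T - 1)) ^ ρ * y ^ ρ := mul_rpow hK hy
      _ ≤ _ := le_add_of_nonneg_left (mul_nonneg (by linarith) (rpow_nonneg hx ρ))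

theorem tsum_inv_pow_mul_le {f : ℕ → ℝ} {s c D : ℝ} (hs : 0 ≤ s) (hsc : s < c)
    (hf0 : ∀ n, 0 ≤ f n) (hf : ∀ n, f n ≤ s ^ n * D) :
    ∑' n, (c ^ n)⁻¹ * f n ≤ (1 - s / c)⁻¹ * D := by
  have hc : 0 < c := hs.trans_lt hsc
  have hr : s / c < 1 := (div_lt_one hc).2 hsc
  have hle : ∀ n, (c ^ n)⁻¹ * f n ≤ (s / c) ^ n * D := fun n => by
    rw [div_pow, div_eq_inv_mul, mul_assoc]
    exact mul_le_mul_of_nonneg_left (hf n) (by positivity)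
  have hg : Summable fun n => (s / c) ^ n * D :=
    (summable_geometric_of_lt_one (by positivity) hr).mul_right D
  calc ∑' n, (c ^ n)⁻¹ * f n ≤ ∑' n, (s / c) ^ n * D :=
        Summable.tsum_le_tsum hle
          (.of_nonneg_of_le (fun n => mul_nonneg (by positivity) (hf0 n)) hle hg) hg
    _ = (1 - s / c)⁻¹ * D := by rw [tsum_mul_right, tsum_geometric_of_lt_one (by positivity) hr]

section Lattice

variable {d : ℕ}

theorem l1norm_le_l1norm_add_l1dist (k i : Fin d → ℤ) : l1norm k ≤ l1norm i + l1dist k i := by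
  rw [l1norm, l1norm, l1dist, ← Finset.sum_add_distrib]
  refine Finset.sum_le_sum fun t _ => ?_
  simpa using Int.natAbs_add_le (i t) (k t - i t)

theorem l1dist_eq_l1norm_sub (k i : Fin d → ℤ) : l1dist k i = l1norm (k - i) := rfl

theorem hasSum_comp_l1dist {f : ℕ → ℝ} {s : ℝ} (h : HasSum (fun z : Fin d → ℤ => f (l1norm z)) s)
    (i : Fin d → ℤ) : HasSum (fun k => f (l1dist k i)) s := by
  simpa only [l1dist_eq_l1norm_sub, Function.comp_def, Equiv.subRight_apply] using
    (Equiv.subRight i).hasSum_iff.mpr h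

theorem summable_pi_prod {α : Type*} {f : α → ℝ} (hf0 : 0 ≤ f) (hf : Summable f) :
    ∀ d : ℕ, Summable fun z : Fin d → α => ∏ k, f (z k)
  | 0 => Summable.of_finite
  | d + 1 => by
    rw [← (Fin.consEquiv fun _ => α).summable_iff]
    simpa [Function.comp_def, Fin.consEquiv, Fin.prod_univ_succ] using
      hf.mul_of_nonneg (summable_pi_prod hf0 hf d) hf0
        fun z => Finset.prod_nonneg fun k _ => hf0 (z k)

theorem summable_exp_neg_mul_l1norm {t : ℝ} (ht : 0 < t) :
    Summable fun z : Fin d → ℤ => exp (-(t * l1norm z)) := by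
  have hgeom : Summable fun n : ℕ => exp (-t) ^ n :=
    summable_geometric_of_lt_one (exp_nonneg _) (exp_lt_one_iff.mpr (neg_lt_zero.mpr ht))
  have hZ : Summable fun m : ℤ => exp (-t) ^ m.natAbs :=
    .of_nat_of_neg (by simpa using hgeom) (by simpa using hgeom)
  refine (summable_pi_prod (fun _ => by positivity) hZ d).congr fun z => ?_
  simp_rw [← exp_nat_mul, ← exp_sum, l1norm, Nat.cast_sum, Finset.mul_sum, ← Finset.sum_neg_distrib]
  exact congrArg exp (Finset.sum_congr rfl fun k _ => by ring)

theorem summable_exp_neg_l1norm_mul_rpow (ρ : ℝ) :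
    Summable fun z : Fin d → ℤ => exp (-(l1norm z : ℝ)) * (l1norm z : ℝ) ^ ρ := by
  obtain ⟨C, hC⟩ := ((tendsto_rpow_mul_exp_neg_mul_atTop_nhds_zero ρ (1 / 2) one_half_pos).comp
    tendsto_natCast_atTop_atTop).bddAbove_range
  refine .of_nonneg_of_le (fun z => by positivity) (fun z => ?_)
    ((summable_exp_neg_mul_l1norm (d := d) one_half_pos).mul_left C)
  have hz : (l1norm z : ℝ) ^ ρ * exp (-(1 / 2) * l1norm z) ≤ C := hC ⟨l1norm z, rfl⟩
  calc exp (-(l1norm z : ℝ)) * (l1norm z : ℝ) ^ ρ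
      = (l1norm z : ℝ) ^ ρ * exp (-(1 / 2) * l1norm z) * exp (-(1 / 2 * l1norm z)) := by
        rw [mul_assoc, ← exp_add]; ring_nf
    _ ≤ C * exp (-(1 / 2 * l1norm z)) := mul_le_mul_of_nonneg_right hz (exp_nonneg _)

theorem tsum_mul_weight_le {a : (Fin d → ℤ) → (Fin d → ℤ) → ℝ} {ρ q K B η : ℝ}
    (hρ : 0 ≤ ρ) (hq : 0 ≤ q) (hB : 0 ≤ B) (hK0 : 0 ≤ K)
    (hK : ∀ x y : ℝ, 0 ≤ x → 0 ≤ y → (x + y) ^ ρ ≤ q * x ^ ρ + K * y ^ ρ)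
    (ha : ∀ i j, 0 ≤ a i j) (hae : ∀ i j, a i j ≤ exp (-(l1dist i j : ℝ)))
    (hcol : ∀ j, ∑' i, a i j ≤ η) (i : Fin d → ℤ) :
    Summable (fun k => a k i * ((l1norm k : ℝ) ^ ρ + B)) ∧
      ∑' k, a k i * ((l1norm k : ℝ) ^ ρ + B) ≤
        η * (q * (l1norm i : ℝ) ^ ρ + B) +
          K * ∑' z : Fin d → ℤ, exp (-(l1norm z : ℝ)) * (l1norm z : ℝ) ^ ρ := by
  set M := ∑' z : Fin d → ℤ, exp (-(l1norm z : ℝ)) * (l1norm z : ℝ) ^ ρ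
  set wi := q * (l1norm i : ℝ) ^ ρ + B
  have hM : HasSum (fun k => exp (-(l1dist k i : ℝ)) * (l1dist k i : ℝ) ^ ρ) M :=
    hasSum_comp_l1dist (f := fun n => exp (-(n : ℝ)) * (n : ℝ) ^ ρ)
      (summable_exp_neg_l1norm_mul_rpow ρ).hasSum i
  have hexp : Summable fun k => exp (-(l1dist k i : ℝ)) :=
    (hasSum_comp_l1dist (f := fun n => exp (-(n : ℝ)))
      (by simpa using (summable_exp_neg_mul_l1norm (d := d) one_pos).hasSum) i).summable
  have hacol : Summable fun k => a k i := .of_nonneg_of_le (ha · i) (hae · i) hexp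
  have hpt : ∀ k, a k i * ((l1norm k : ℝ) ^ ρ + B) ≤
      wi * a k i + K * (exp (-(l1dist k i : ℝ)) * (l1dist k i : ℝ) ^ ρ) := by
    intro k
    have htri : (l1norm k : ℝ) ^ ρ ≤ q * (l1norm i : ℝ) ^ ρ + K * (l1dist k i : ℝ) ^ ρ :=
      (rpow_le_rpow (by positivity) (by exact_mod_cast l1norm_le_l1norm_add_l1dist k i) hρ).trans
        (hK _ _ (by positivity) (by positivity))
    calc a k i * ((l1norm k : ℝ) ^ ρ + B)
        ≤ a k i * (q * (l1norm i : ℝ) ^ ρ + K * (l1dist k i : ℝ) ^ ρ + B) := by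
          gcongr; exact ha k i
      _ = wi * a k i + K * (a k i * (l1dist k i : ℝ) ^ ρ) := by ring
      _ ≤ _ := by gcongr; exact hae k i
  have hsum := (hacol.mul_left wi).add (hM.summable.mul_left K)
  have hlhs : Summable fun k => a k i * ((l1norm k : ℝ) ^ ρ + B) :=
    .of_nonneg_of_le (fun k => mul_nonneg (ha k i) (by positivity)) hpt hsum
  refine ⟨hlhs, ?_⟩
  calc ∑' k, a k i * ((l1norm k : ℝ) ^ ρ + B)
      ≤ ∑' k, (wi * a k i + K * (exp (-(l1dist k i : ℝ)) * (l1dist k i : ℝ) ^ ρ)) :=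
        Summable.tsum_le_tsum hpt hlhs hsum
    _ = wi * ∑' k, a k i + K * M := by
        rw [(hacol.mul_left wi).tsum_add (hM.summable.mul_left K), tsum_mul_left, tsum_mul_left,
          hM.tsum_eq]
    _ ≤ η * wi + K * M := by
        rw [mul_comm η]; gcongr; exact hcol i

theorem exists_tsum_mul_weight_le {ρ η η' : ℝ} (hρ : 0 < ρ) (hη : 0 < η)
    (hηη' : η < η') :
    ∃ B, 1 ≤ B ∧ ∀ a : (Fin d → ℤ) → (Fin d → ℤ) → ℝ, (∀ i j, 0 ≤ a i j) →
      (∀ i j, a i j ≤ exp (-(l1dist i j : ℝ))) → (∀ j, ∑' i, a i j ≤ η) → ∀ i,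
        Summable (fun k => a k i * ((l1norm k : ℝ) ^ ρ + B)) ∧
          ∑' k, a k i * ((l1norm k : ℝ) ^ ρ + B) ≤ η' * ((l1norm i : ℝ) ^ ρ + B) := by
  obtain ⟨K, hK0, hK⟩ := exists_rpow_add_le hρ ((one_lt_div hη).2 hηη')
  set M := ∑' z : Fin d → ℤ, exp (-(l1norm z : ℝ)) * (l1norm z : ℝ) ^ ρ
  set B := max 1 (K * M / (η' - η))
  have hB1 : 1 ≤ B := le_max_left _ _
  have hKM : K * M ≤ (η' - η) * B := by
    have := (div_le_iff₀ (sub_pos.2 hηη')).1 (le_max_right 1 (K * M / (η' - η)))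
    linarith
  refine ⟨B, hB1, fun a ha hae hcol i => ?_⟩
  obtain ⟨hs, hle⟩ := tsum_mul_weight_le hρ.le (div_pos (hη.trans hηη') hη).le
    (zero_le_one.trans hB1) hK0 hK ha hae hcol i
  refine ⟨hs, hle.trans ?_⟩
  rw [mul_add, ← mul_assoc, mul_div_cancel₀ _ hη.ne']
  linarith

end Lattice

section Kernel

variable {ι : Type*} [DecidableEq ι]

/-- `matpow` computed in `ℝ≥0∞`, where every `tsum` is meaningful and sums commute freely
(the real `tsum` in `matpow` is `0` on non-summable families). -/
noncomputable def ennMatpow (A : ι → ι → ℝ≥0∞) : ℕ → ι → ι → ℝ≥0∞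
  | 0 => fun i j => if i = j then 1 else 0
  | n + 1 => fun i j => ∑' k, ennMatpow A n i k * A k j

theorem tsum_ennMatpow_mul_le {A : ι → ι → ℝ≥0∞} {W : ι → ℝ≥0∞} {s : ℝ≥0∞}
    (hW : ∀ i, ∑' k, A k i * W k ≤ s * W i) (n : ℕ) (i : ι) :
    ∑' j, ennMatpow A n j i * W j ≤ s ^ n * W i := by
  induction n generalizing i with
  | zero => simp [ennMatpow, ite_mul]
  | succ n ih =>
    calc ∑' j, ennMatpow A (n + 1) j i * W j
        = ∑' k, (∑' j, ennMatpow A n j k * W j) * A k i := by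
          simp_rw [ennMatpow, ← ENNReal.tsum_mul_right]
          rw [ENNReal.tsum_comm]
          exact tsum_congr fun k => tsum_congr fun j => by ring
      _ ≤ ∑' k, s ^ n * W k * A k i := ENNReal.tsum_le_tsum fun k => by gcongr; exact ih k
      _ = s ^ n * ∑' k, A k i * W k := by
          rw [← ENNReal.tsum_mul_left]; exact tsum_congr fun k => by ring
      _ ≤ s ^ (n + 1) * W i := by rw [pow_succ, mul_assoc]; gcongr; exact hW i

theorem matpow_nonneg {a : ι → ι → ℝ} (ha : ∀ i j, 0 ≤ a i j) (n : ℕ) (i j : ι) :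
    0 ≤ matpow a n i j := by
  induction n generalizing j with
  | zero => simp only [matpow]; split_ifs <;> norm_num
  | succ n ih => exact tsum_nonneg fun k => mul_nonneg (ih k) (ha k j)

theorem matpow_eq_toReal_ennMatpow {a : ι → ι → ℝ} (ha : ∀ i j, 0 ≤ a i j)
    (hfin : ∀ n i j, ennMatpow (fun p q => ENNReal.ofReal (a p q)) n i j ≠ ⊤) (n : ℕ) (i j : ι) :
    matpow a n i j = (ennMatpow (fun p q => ENNReal.ofReal (a p q)) n i j).toReal := by
  induction n generalizing j with
  | zero => simp only [matpow, ennMatpow]; split_ifs <;> simp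
  | succ n ih =>
    simp only [matpow, ennMatpow]
    rw [ENNReal.tsum_toReal_eq fun k => ENNReal.mul_ne_top (hfin n i k) ENNReal.ofReal_ne_top]
    exact tsum_congr fun k => by rw [ENNReal.toReal_mul, ENNReal.toReal_ofReal (ha k j), ih]

theorem tsum_matpow_mul_le {a : ι → ι → ℝ} {w : ι → ℝ} {s : ℝ} (ha : ∀ i j, 0 ≤ a i j)
    (hw : ∀ i, 0 < w i) (hsum : ∀ i, Summable fun k => a k i * w k)
    (hstep : ∀ i, ∑' k, a k i * w k ≤ s * w i) (n : ℕ) (i : ι) :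
    Summable (fun j => matpow a n j i * w j) ∧ ∑' j, matpow a n j i * w j ≤ s ^ n * w i := by
  set A : ι → ι → ℝ≥0∞ := fun p q => ENNReal.ofReal (a p q)
  set W : ι → ℝ≥0∞ := fun j => ENNReal.ofReal (w j)
  have hs : 0 ≤ s := nonneg_of_mul_nonneg_left
    ((tsum_nonneg fun k => mul_nonneg (ha k i) (hw k).le).trans (hstep i)) (hw i)
  have hW : ∀ i, ∑' k, A k i * W k ≤ ENNReal.ofReal s * W i := fun i => by
    simp only [A, W, ← ENNReal.ofReal_mul (ha _ i), ← ENNReal.ofReal_mul hs]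
    rw [← ENNReal.ofReal_tsum_of_nonneg (fun k => mul_nonneg (ha k i) (hw k).le) (hsum i)]
    exact ENNReal.ofReal_le_ofReal (hstep i)
  have hbound := tsum_ennMatpow_mul_le hW
  have hrhs : ∀ n i, ENNReal.ofReal s ^ n * W i ≠ ⊤ := fun n i => by simp [W, ENNReal.mul_ne_top]
  have hfin_sum : ∀ n i, ∑' j, ennMatpow A n j i * W j ≠ ⊤ := fun n i =>
    ne_top_of_le_ne_top (hrhs n i) (hbound n i)
  have hfin : ∀ n j i, ennMatpow A n j i ≠ ⊤ := fun n j i h =>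
    hfin_sum n i (ENNReal.tsum_eq_top_of_eq_top
      ⟨j, ENNReal.mul_eq_top.2 (.inr ⟨h, by simpa [W] using hw j⟩)⟩)
  have heq : (fun j => matpow a n j i * w j) = fun j => (ennMatpow A n j i * W j).toReal := by
    ext j
    rw [ENNReal.toReal_mul, ENNReal.toReal_ofReal (hw j).le, matpow_eq_toReal_ennMatpow ha hfin]
  rw [heq]
  refine ⟨ENNReal.summable_toReal (hfin_sum n i), ?_⟩
  rw [← ENNReal.tsum_toReal_eq fun j => ENNReal.mul_ne_top (hfin n j i) ENNReal.ofReal_ne_top]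
  calc (∑' j, ennMatpow A n j i * W j).toReal
      ≤ (ENNReal.ofReal s ^ n * W i).toReal :=
        ENNReal.toReal_mono (hrhs n i) (hbound n i)
    _ = s ^ n * w i := by
        rw [ENNReal.toReal_mul, ENNReal.toReal_pow, ENNReal.toReal_ofReal hs,
          ENNReal.toReal_ofReal (hw i).le]

theorem tsum_matpow_mul_le_of_le {a : ι → ι → ℝ} {w b : ι → ℝ} {s R : ℝ} (ha : ∀ i j, 0 ≤ a i j)
    (hw : ∀ i, 0 < w i) (hsum : ∀ i, Summable fun k => a k i * w k)
    (hstep : ∀ i, ∑' k, a k i * w k ≤ s * w i) (hb0 : ∀ j, 0 ≤ b j) (hbw : ∀ j, b j ≤ R * w j)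
    (n : ℕ) (i : ι) : ∑' j, matpow a n j i * b j ≤ s ^ n * (R * w i) := by
  obtain ⟨hsum_n, hle_n⟩ := tsum_matpow_mul_le ha hw hsum hstep n i
  have hR : 0 ≤ R := nonneg_of_mul_nonneg_left ((hb0 i).trans (hbw i)) (hw i)
  have hmb : ∀ j, matpow a n j i * b j ≤ R * (matpow a n j i * w j) := fun j => by
    rw [mul_left_comm]; exact mul_le_mul_of_nonneg_left (hbw j) (matpow_nonneg ha n j i)
  calc ∑' j, matpow a n j i * b j ≤ ∑' j, R * (matpow a n j i * w j) :=
        Summable.tsum_le_tsum hmb (.of_nonneg_of_le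
          (fun j => mul_nonneg (matpow_nonneg ha n j i) (hb0 j)) hmb (hsum_n.mul_left R))
          (hsum_n.mul_left R)
    _ ≤ s ^ n * (R * w i) := by
        rw [tsum_mul_left, mul_left_comm]; exact mul_le_mul_of_nonneg_left hle_n hR

end Kernel

theorem stmt8_general {d : ℕ} (R ρ η c : ℝ) (hR : 0 < R) (hρ : 0 < ρ)
    (hη : 0 < η) (hc : η < c) :
    ∃ C : ℝ, 0 < C ∧
      ∀ (a : (Fin d → ℤ) → (Fin d → ℤ) → ℝ) (b u : (Fin d → ℤ) → ℝ),
        (∀ i j, 0 ≤ a i j) → (∀ i j, a i j ≤ Real.exp (-(l1dist i j : ℝ))) →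
        (∀ i, ∑' j, a i j ≤ η) → (∀ j, ∑' i, a i j ≤ η) →
        (∀ j, 0 ≤ b j) → (∀ j, b j ≤ R * ((l1norm j : ℝ) ^ ρ + 1)) →
        (∀ i, 0 ≤ u i) →
        (∀ i, u i ≤ ∑' n : ℕ, (c ^ n)⁻¹ * ∑' j, matpow a n j i * b j) →
        ∀ i, u i ≤ C * (1 + (l1norm i : ℝ) ^ ρ) := by
  obtain ⟨η', hηη', hη'c⟩ := exists_between hc
  have hη' : 0 < η' := hη.trans hηη'
  obtain ⟨B, hB1, hB⟩ := exists_tsum_mul_weight_le (d := d) hρ hη hηη'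
  have hgap : 0 < 1 - η' / c := sub_pos.2 ((div_lt_one (hη'.trans hη'c)).2 hη'c)
  refine ⟨R * B * (1 - η' / c)⁻¹, by positivity, fun a b u ha hae _ hcol hb0 hbR _ hu i => ?_⟩
  set w : (Fin d → ℤ) → ℝ := fun j => (l1norm j : ℝ) ^ ρ + B
  have hw : ∀ j, 0 < w j := fun j => by positivity
  have hbw : ∀ j, b j ≤ R * w j := fun j => (hbR j).trans (by gcongr; exact add_le_add_right hB1 _)
  have hn := tsum_matpow_mul_le_of_le ha hw (fun i => (hB a ha hae hcol i).1)
    (fun i => (hB a ha hae hcol i).2) hb0 hbw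
  calc u i ≤ (1 - η' / c)⁻¹ * (R * w i) :=
        (hu i).trans (tsum_inv_pow_mul_le hη'.le hη'c
          (fun n => tsum_nonneg fun j => mul_nonneg (matpow_nonneg ha n j i) (hb0 j)) (hn · i))
    _ ≤ (1 - η' / c)⁻¹ * (R * (B * (1 + (l1norm i : ℝ) ^ ρ))) := by
        gcongr
        nlinarith [rpow_nonneg (Nat.cast_nonneg (α := ℝ) (l1norm i)) ρ]
    _ = R * B * (1 - η' / c)⁻¹ * (1 + (l1norm i : ℝ) ^ ρ) := by ring

theorem stmt8 {d : ℕ} (hd : 1 ≤ d) (R ρ η c : ℝ) (hR : 0 < R) (hρ : 0 < ρ)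
    (hη : 0 < η) (hc : η < c) :
    ∃ C : ℝ, 0 < C ∧
      ∀ (a : (Fin d → ℤ) → (Fin d → ℤ) → ℝ) (b u : (Fin d → ℤ) → ℝ),
        (∀ i j, 0 ≤ a i j) → (∀ i j, a i j ≤ Real.exp (-(l1dist i j : ℝ))) →
        (∀ i, ∑' j, a i j ≤ η) → (∀ j, ∑' i, a i j ≤ η) →
        (∀ j, 0 ≤ b j) → (∀ j, b j ≤ R * ((l1norm j : ℝ) ^ ρ + 1)) →
        (∀ i, 0 ≤ u i) →
        (∀ i, u i ≤ ∑' n : ℕ, (c ^ n)⁻¹ * ∑' j, matpow a n j i * b j) →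
        ∀ i, u i ≤ C * (1 + (l1norm i : ℝ) ^ ρ) :=
  stmt8_general R ρ η c hR hρ hη hc
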